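/- Let N ≥ 4, let A : S^{N−1} → ℝ^N and a : S^{N−1} → ℝ be bounded and measurable, let k ≥ 1 be an integer, let Φ ∈ C_c^∞(ℝ^N, ℂ) with Φ ≢ 0, and let sequences (x_n^j)_{n} ⊂ ℝ^N for j = 1, …, k satisfy |x_n^j| → ∞ for each j and |x_n^i − x_n^j| → ∞ for all i ≠ j. Then, as n → ∞, Q_{A,a}( Σ_{j=1}^{k} Φ(·+x_n^j) ) / ( ∫_{ℝ^N} |Σ_{j=1}^{k} Φ(x+x_n^j)|^{2^*} dx )^{2/2^*} → k^{2/N} · ∫_{ℝ^N}|∇Φ|² dx / (∫_{ℝ^N}|Φ|^{2^*} dx)^{2/2^*}; in particular the limit is ≥ k^{2/N}·S. -/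

import Mathlib

open MeasureTheory Complex Filter Metric

noncomputable def grad2 (N : ℕ) (u : EuclideanSpace ℝ (Fin N) → ℂ)
    (x : EuclideanSpace ℝ (Fin N)) : ℝ :=
  ∑ j : Fin N, ‖fderiv ℝ u x (EuclideanSpace.single j 1)‖ ^ 2

noncomputable def magGrad2 (N : ℕ) (A : EuclideanSpace ℝ (Fin N) → EuclideanSpace ℝ (Fin N))
    (u : EuclideanSpace ℝ (Fin N) → ℂ) (x : EuclideanSpace ℝ (Fin N)) : ℝ :=
  ∑ j : Fin N, ‖Complex.I * fderiv ℝ u x (EuclideanSpace.single j 1)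
      - ((A (‖x‖⁻¹ • x) j / ‖x‖ : ℝ) : ℂ) * u x‖ ^ 2

noncomputable def Qf (N : ℕ) (A : EuclideanSpace ℝ (Fin N) → EuclideanSpace ℝ (Fin N))
    (a : EuclideanSpace ℝ (Fin N) → ℝ) (u : EuclideanSpace ℝ (Fin N) → ℂ) : ℝ :=
  (∫ x, magGrad2 N A u x) - ∫ x, (a (‖x‖⁻¹ • x) / ‖x‖ ^ 2) * ‖u x‖ ^ 2

/-- `(∫ |u|^{2^*})^{2/2^*}` with `2^* = 2N/(N−2)`, so `2/2^* = (N−2)/N`. -/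
noncomputable def lpDen (N : ℕ) (u : EuclideanSpace ℝ (Fin N) → ℂ) : ℝ :=
  (∫ x, ‖u x‖ ^ ((2 * (N : ℝ)) / ((N : ℝ) - 2))) ^ (((N : ℝ) - 2) / (N : ℝ))

/-- the best Sobolev constant `S` for `D^{1,2}(ℝ^N) ↪ L^{2^*}(ℝ^N)`. -/
noncomputable def SobolevS (N : ℕ) : ℝ :=
  sInf { r : ℝ | ∃ u : EuclideanSpace ℝ (Fin N) → ℂ, ContDiff ℝ (⊤ : ℕ∞) u ∧ HasCompactSupport u ∧
    u ≠ 0 ∧ r = (∫ x, grad2 N u x) / lpDen N u }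

/-- `S_{A,a}`: infimum of the magnetic Rayleigh quotient over `C_c^∞(ℝ^N∖{0})∖{0}`. -/
noncomputable def SAa (N : ℕ) (A : EuclideanSpace ℝ (Fin N) → EuclideanSpace ℝ (Fin N))
    (a : EuclideanSpace ℝ (Fin N) → ℝ) : ℝ :=
  sInf { r : ℝ | ∃ u : EuclideanSpace ℝ (Fin N) → ℂ, ContDiff ℝ (⊤ : ℕ∞) u ∧ HasCompactSupport u ∧
    (0 : EuclideanSpace ℝ (Fin N)) ∉ tsupport u ∧ u ≠ 0 ∧ r = Qf N A a u / lpDen N u }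

/-! ### Auxiliary lemmas -/

section Aux

variable {N : ℕ}
local notation "EN" => EuclideanSpace ℝ (Fin N)

/-- coordinates are bounded by the norm. -/
theorem coord_le_norm (x : EN) (j : Fin N) : |x j| ≤ ‖x‖ := by
  rw [EuclideanSpace.norm_eq, ← Real.sqrt_sq_eq_abs]
  apply Real.sqrt_le_sqrt
  have h : ‖x j‖ ^ 2 ≤ ∑ i, ‖x i‖ ^ 2 := Finset.single_le_sum (f := fun i => ‖x i‖ ^ 2)
    (fun i _ => sq_nonneg _) (Finset.mem_univ j)
  simpa [Real.norm_eq_abs, sq_abs] using h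

theorem fderiv_translate' {F : Type*} [NormedAddCommGroup F] [NormedSpace ℝ F]
    (f : F → ℂ) (hf : ContDiff ℝ (⊤ : ℕ∞) f) (c x : F) :
    fderiv ℝ (fun y => f (y + c)) x = fderiv ℝ f (x + c) := by
  have h1 : HasFDerivAt (fun y : F => y + c) (ContinuousLinearMap.id ℝ F) x :=
    (hasFDerivAt_id x).add_const c
  have h2 := (hf.differentiable (by simp) (x + c)).hasFDerivAt
  have := (h2.comp x h1).fderiv
  simpa [Function.comp_def] using this

theorem sq_diff_bound (w z : ℂ) :
    |‖w - z‖ ^ 2 - ‖w‖ ^ 2| ≤ 2 * ‖w‖ * ‖z‖ + 3 * ‖z‖ ^ 2 := by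
  have h1 : ‖w - z‖ ≤ ‖w‖ + ‖z‖ := norm_sub_le _ _
  have h2 : ‖w‖ ≤ ‖w - z‖ + ‖z‖ := by
    calc ‖w‖ = ‖(w - z) + z‖ := by ring_nf
    _ ≤ ‖w - z‖ + ‖z‖ := norm_add_le _ _
  have h3 := norm_nonneg (w - z)
  have h4 := norm_nonneg w
  have h5 := norm_nonneg z
  rw [abs_le]
  constructor <;> nlinarith

theorem translate_outside (Φ : EN → ℂ) (hΦ : ContDiff ℝ (⊤ : ℕ∞) Φ)
    {R : ℝ} (hsupp : tsupport Φ ⊆ closedBall 0 R) (c x : EN)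
    (h : x ∉ closedBall (-c) R) :
    Φ (x + c) = 0 ∧ fderiv ℝ (fun y => Φ (y + c)) x = 0 := by
  have hx : x + c ∉ tsupport Φ := by
    intro hmem
    apply h
    have h2 := hsupp hmem
    rw [mem_closedBall, dist_eq_norm] at h2 ⊢
    rw [sub_neg_eq_add]
    simpa using h2
  refine ⟨image_eq_zero_of_notMem_tsupport hx, ?_⟩
  rw [fderiv_translate' Φ hΦ c x]
  by_contra hne
  exact hx (support_fderiv_subset (𝕜 := ℝ) hne)

theorem integrable_ball_bound {f : EN → ℝ}
    (hm : AEStronglyMeasurable f volume) (c : EN) (R B : ℝ)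
    (hb : ∀ x, ‖f x‖ ≤ (closedBall c R).indicator (fun _ => B) x) : Integrable f := by
  apply Integrable.mono' _ hm (Filter.Eventually.of_forall hb)
  exact (integrable_indicator_iff measurableSet_closedBall).2
    (integrableOn_const measure_closedBall_lt_top.ne enorm_ne_top)

theorem integral_abs_le_ball {f : EN → ℝ}
    (c : EN) {R B : ℝ}
    (hb : ∀ x, ‖f x‖ ≤ (closedBall c R).indicator (fun _ => B) x) :
    |∫ x, f x| ≤ (volume (closedBall (0 : EN) R)).toReal * B := by
  have hint : Integrable ((closedBall c R).indicator (fun _ => B)) :=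
    (integrable_indicator_iff measurableSet_closedBall).2
      (integrableOn_const measure_closedBall_lt_top.ne enorm_ne_top)
  have h1 : ‖∫ x, f x‖ ≤ ∫ x, (closedBall c R).indicator (fun _ => B) x :=
    norm_integral_le_of_norm_le hint (Filter.Eventually.of_forall hb)
  rw [Real.norm_eq_abs] at h1
  calc |∫ x, f x| ≤ ∫ x, (closedBall c R).indicator (fun _ => B) x := h1
  _ = (volume (closedBall c R)).toReal • B := integral_indicator_const B measurableSet_closedBall
  _ = (volume (closedBall (0 : EN) R)).toReal * B := by
      rw [smul_eq_mul, Measure.addHaar_closedBall_center]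

theorem normalize_meas : Measurable (fun x : EN => ‖x‖⁻¹ • x) :=
  (measurable_norm.inv).smul measurable_id

theorem fderiv_app_cont (v : EN → ℂ) (hv : ContDiff ℝ (⊤ : ℕ∞) v) (e : EN) :
    Continuous (fun x => fderiv ℝ v x e) :=
  (ContinuousLinearMap.apply ℝ ℂ e).continuous.comp (hv.continuous_fderiv (by simp))

theorem magGrad2_meas (A : EN → EN) (hAmeas : Measurable A) (v : EN → ℂ)
    (hv : ContDiff ℝ (⊤ : ℕ∞) v) : Measurable (magGrad2 N A v) := by
  apply Finset.measurable_sum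
  intro j _
  have mD : Measurable (fun x => fderiv ℝ v x (EuclideanSpace.single j 1)) :=
    (fderiv_app_cont v hv _).measurable
  have mr : Measurable (fun x : EN => (A (‖x‖⁻¹ • x) j / ‖x‖ : ℝ)) :=
    ((EuclideanSpace.proj j : EN →L[ℝ] ℝ).continuous.measurable.comp (hAmeas.comp normalize_meas)).div measurable_norm
  have : Measurable (fun x : EN => Complex.I * fderiv ℝ v x (EuclideanSpace.single j 1)
      - ((A (‖x‖⁻¹ • x) j / ‖x‖ : ℝ) : ℂ) * v x) :=
    (measurable_const.mul mD).sub
      ((Complex.measurable_ofReal.comp mr).mul hv.continuous.measurable)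
  exact this.norm.pow_const 2

theorem aterm_meas (a : EN → ℝ) (hameas : Measurable a) (v : EN → ℂ) (hv : Continuous v) :
    Measurable (fun x : EN => (a (‖x‖⁻¹ • x) / ‖x‖ ^ 2) * ‖v x‖ ^ 2) :=
  ((hameas.comp normalize_meas).div (measurable_norm.pow_const 2)).mul
    (hv.measurable.norm.pow_const 2)

theorem grad2_cont (Φ : EN → ℂ) (hΦ : ContDiff ℝ (⊤ : ℕ∞) Φ) : Continuous (grad2 N Φ) := by
  apply continuous_finset_sum
  intro j _
  exact ((fderiv_app_cont Φ hΦ _).norm).pow 2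

theorem grad2_integrable (Φ : EN → ℂ) (hΦ : ContDiff ℝ (⊤ : ℕ∞) Φ) (hΦsupp : HasCompactSupport Φ) :
    Integrable (grad2 N Φ) := by
  apply (grad2_cont Φ hΦ).integrable_of_hasCompactSupport
  apply (hΦsupp.fderiv ℝ).mono
  intro x hx
  simp only [Function.mem_support] at hx ⊢
  intro h0
  apply hx
  simp [grad2, h0]

theorem ball_norm_lb {R : ℝ} {c x : EN} (hc : R + 1 ≤ ‖c‖) (hx : x ∈ closedBall (-c) R) :
    ‖x + c‖ ≤ R ∧ ‖c‖ - R ≤ ‖x‖ ∧ 1 ≤ ‖x‖ := by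
  rw [mem_closedBall, dist_eq_norm, sub_neg_eq_add] at hx
  have h1 : ‖c‖ ≤ ‖x + c‖ + ‖x‖ := by
    calc ‖c‖ = ‖(x + c) - x‖ := by rw [add_sub_cancel_left]
    _ ≤ ‖x + c‖ + ‖x‖ := norm_sub_le _ _
  exact ⟨hx, by linarith, by linarith⟩

theorem coeff_bound (A : EN → EN) {CA : ℝ} (hAbd : ∀ θ : EN, ‖A θ‖ ≤ CA)
    {R : ℝ} {c x : EN} (hc : R + 1 ≤ ‖c‖) (hx : x ∈ closedBall (-c) R) (j : Fin N) :
    |A (‖x‖⁻¹ • x) j / ‖x‖| ≤ CA / (‖c‖ - R) ∧ |A (‖x‖⁻¹ • x) j / ‖x‖| ≤ CA := by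
  obtain ⟨-, h3, h4⟩ := ball_norm_lb hc hx
  have hCA : 0 ≤ CA := le_trans (norm_nonneg _) (hAbd 0)
  have hxpos : (0:ℝ) < ‖x‖ := by linarith
  have hAj : |A (‖x‖⁻¹ • x) j| ≤ CA := le_trans (coord_le_norm _ _) (hAbd _)
  rw [abs_div, abs_of_pos hxpos]
  constructor
  · exact div_le_div₀ hCA hAj (by linarith) h3
  · calc |A (‖x‖⁻¹ • x) j| / ‖x‖ ≤ CA / 1 := div_le_div₀ hCA hAj one_pos h4
    _ = CA := div_one CA

end Aux

section Translate

variable {N : ℕ}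
local notation "EN" => EuclideanSpace ℝ (Fin N)

variable (A : EuclideanSpace ℝ (Fin N) → EuclideanSpace ℝ (Fin N))
  (a : EuclideanSpace ℝ (Fin N) → ℝ)
  (Φ : EuclideanSpace ℝ (Fin N) → ℂ)

theorem fderiv_app_bound (hΦ : ContDiff ℝ (⊤ : ℕ∞) Φ) {KD : ℝ}
    (hKD : ∀ x, ‖fderiv ℝ Φ x‖ ≤ KD) (y : EN) (j : Fin N) :
    ‖fderiv ℝ Φ y (EuclideanSpace.single j 1)‖ ≤ KD := by
  calc ‖fderiv ℝ Φ y (EuclideanSpace.single j 1)‖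
      ≤ ‖fderiv ℝ Φ y‖ * ‖EuclideanSpace.single j (1:ℝ)‖ :=
        (fderiv ℝ Φ y).le_opNorm _
  _ = ‖fderiv ℝ Φ y‖ := by rw [EuclideanSpace.norm_single]; simp
  _ ≤ KD := hKD y

/-- pointwise bound on `magGrad2` of a translate (crude version, for integrability). -/
theorem magGrad2_translate_bound (hΦ : ContDiff ℝ (⊤ : ℕ∞) Φ)
    {R : ℝ} (hsupp : tsupport Φ ⊆ closedBall 0 R)
    {CA : ℝ} (hAbd : ∀ θ : EN, ‖A θ‖ ≤ CA)
    {KΦ : ℝ} (hKΦ : ∀ x, ‖Φ x‖ ≤ KΦ)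
    {KD : ℝ} (hKD : ∀ x, ‖fderiv ℝ Φ x‖ ≤ KD)
    {c : EN} (hc : R + 1 ≤ ‖c‖) (x : EN) :
    ‖magGrad2 N A (fun y => Φ (y + c)) x‖ ≤
      (closedBall (-c) R).indicator (fun _ => (N : ℝ) * (KD + CA * KΦ) ^ 2) x := by
  by_cases hx : x ∈ closedBall (-c) R
  · rw [Set.indicator_of_mem hx]
    have hterm : ∀ j : Fin N,
        ‖Complex.I * fderiv ℝ (fun y => Φ (y + c)) x (EuclideanSpace.single j 1)
          - ((A (‖x‖⁻¹ • x) j / ‖x‖ : ℝ) : ℂ) * Φ (x + c)‖ ^ 2 ≤ (KD + CA * KΦ) ^ 2 := by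
      intro j
      have hD : ‖Complex.I * fderiv ℝ (fun y => Φ (y + c)) x (EuclideanSpace.single j 1)‖
          ≤ KD := by
        rw [norm_mul, Complex.norm_I, one_mul, fderiv_translate' Φ hΦ c x]
        exact fderiv_app_bound Φ hΦ hKD _ j
      have hz : ‖((A (‖x‖⁻¹ • x) j / ‖x‖ : ℝ) : ℂ) * Φ (x + c)‖ ≤ CA * KΦ := by
        rw [norm_mul, Complex.norm_real, Real.norm_eq_abs]
        have h1 := (coeff_bound A hAbd hc hx j).2
        have hKΦ0 : 0 ≤ KΦ := le_trans (norm_nonneg _) (hKΦ 0)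
        have := mul_le_mul h1 (hKΦ (x + c)) (norm_nonneg _) (by
          have hCA : 0 ≤ CA := le_trans (norm_nonneg _) (hAbd 0); exact hCA)
        exact this
      have htri := norm_sub_le
        (Complex.I * fderiv ℝ (fun y => Φ (y + c)) x (EuclideanSpace.single j 1))
        (((A (‖x‖⁻¹ • x) j / ‖x‖ : ℝ) : ℂ) * Φ (x + c))
      have hnn := norm_nonneg (Complex.I * fderiv ℝ (fun y => Φ (y + c)) x
        (EuclideanSpace.single j 1) - ((A (‖x‖⁻¹ • x) j / ‖x‖ : ℝ) : ℂ) * Φ (x + c))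
      nlinarith [norm_nonneg (Complex.I * fderiv ℝ (fun y => Φ (y + c)) x
        (EuclideanSpace.single j 1)),
        norm_nonneg (((A (‖x‖⁻¹ • x) j / ‖x‖ : ℝ) : ℂ) * Φ (x + c))]
    calc ‖magGrad2 N A (fun y => Φ (y + c)) x‖
        = magGrad2 N A (fun y => Φ (y + c)) x := by
          rw [Real.norm_eq_abs, _root_.abs_of_nonneg]
          exact Finset.sum_nonneg fun j _ => sq_nonneg _
    _ ≤ ∑ _j : Fin N, (KD + CA * KΦ) ^ 2 := Finset.sum_le_sum fun j _ => hterm j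
    _ = (N : ℝ) * (KD + CA * KΦ) ^ 2 := by
        rw [Finset.sum_const, Finset.card_univ, Fintype.card_fin, nsmul_eq_mul]
  · rw [Set.indicator_of_notMem hx]
    obtain ⟨h0, hD0⟩ := translate_outside Φ hΦ hsupp c x hx
    simp [magGrad2, h0, hD0]

theorem magGrad2_translate_integrable (hAmeas : Measurable A) (hΦ : ContDiff ℝ (⊤ : ℕ∞) Φ)
    {R : ℝ} (hsupp : tsupport Φ ⊆ closedBall 0 R)
    {CA : ℝ} (hAbd : ∀ θ : EN, ‖A θ‖ ≤ CA)
    {KΦ : ℝ} (hKΦ : ∀ x, ‖Φ x‖ ≤ KΦ)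
    {KD : ℝ} (hKD : ∀ x, ‖fderiv ℝ Φ x‖ ≤ KD)
    {c : EN} (hc : R + 1 ≤ ‖c‖) :
    Integrable (magGrad2 N A (fun y => Φ (y + c))) := by
  have hv : ContDiff ℝ (⊤ : ℕ∞) (fun y : EN => Φ (y + c)) := hΦ.comp (contDiff_id.add contDiff_const)
  exact integrable_ball_bound (magGrad2_meas A hAmeas _ hv).aestronglyMeasurable (-c) R _
    (magGrad2_translate_bound A Φ hΦ hsupp hAbd hKΦ hKD hc)

theorem aterm_translate_bound (hΦ : ContDiff ℝ (⊤ : ℕ∞) Φ)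
    {R : ℝ} (hsupp : tsupport Φ ⊆ closedBall 0 R)
    {Ma : ℝ} (habd : ∀ θ : EN, |a θ| ≤ Ma)
    {KΦ : ℝ} (hKΦ : ∀ x, ‖Φ x‖ ≤ KΦ)
    {c : EN} (hc : R + 1 ≤ ‖c‖) (x : EN) :
    ‖(a (‖x‖⁻¹ • x) / ‖x‖ ^ 2) * ‖Φ (x + c)‖ ^ 2‖ ≤
      (closedBall (-c) R).indicator
        (fun _ => (Ma * KΦ ^ 2) * (1 / (‖c‖ - R))) x := by
  have hMa : 0 ≤ Ma := le_trans (abs_nonneg _) (habd 0)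
  have hKΦ0 : 0 ≤ KΦ := le_trans (norm_nonneg _) (hKΦ 0)
  by_cases hx : x ∈ closedBall (-c) R
  · rw [Set.indicator_of_mem hx]
    obtain ⟨-, h3, h4⟩ := ball_norm_lb hc hx
    have hxpos : (0:ℝ) < ‖x‖ := by linarith
    have hcR : (0:ℝ) < ‖c‖ - R := by linarith
    rw [Real.norm_eq_abs, abs_mul, abs_div, abs_of_pos (by positivity : (0:ℝ) < ‖x‖ ^ 2)]
    have h5 : |a (‖x‖⁻¹ • x)| / ‖x‖ ^ 2 ≤ Ma / (‖c‖ - R) := by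
      apply div_le_div₀ hMa (habd _) hcR
      nlinarith
    have h6 : |‖Φ (x + c)‖ ^ 2| ≤ KΦ ^ 2 := by
      rw [_root_.abs_of_nonneg (sq_nonneg _)]
      nlinarith [norm_nonneg (Φ (x + c)), hKΦ (x + c)]
    calc |a (‖x‖⁻¹ • x)| / ‖x‖ ^ 2 * |‖Φ (x + c)‖ ^ 2|
        ≤ (Ma / (‖c‖ - R)) * KΦ ^ 2 := by
          apply mul_le_mul h5 h6 (abs_nonneg _) (by positivity)
    _ = (Ma * KΦ ^ 2) * (1 / (‖c‖ - R)) := by ring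
  · rw [Set.indicator_of_notMem hx]
    obtain ⟨h0, -⟩ := translate_outside Φ hΦ hsupp c x hx
    simp [h0]

theorem aterm_translate_integrable (hameas : Measurable a) (hΦ : ContDiff ℝ (⊤ : ℕ∞) Φ)
    {R : ℝ} (hsupp : tsupport Φ ⊆ closedBall 0 R)
    {Ma : ℝ} (habd : ∀ θ : EN, |a θ| ≤ Ma)
    {KΦ : ℝ} (hKΦ : ∀ x, ‖Φ x‖ ≤ KΦ)
    {c : EN} (hc : R + 1 ≤ ‖c‖) :
    Integrable (fun x : EN => (a (‖x‖⁻¹ • x) / ‖x‖ ^ 2) * ‖Φ (x + c)‖ ^ 2) := by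
  have hv : Continuous (fun y : EN => Φ (y + c)) :=
    hΦ.continuous.comp (continuous_id.add continuous_const)
  exact integrable_ball_bound (aterm_meas a hameas _ hv).aestronglyMeasurable (-c) R _
    (aterm_translate_bound a Φ hΦ hsupp habd hKΦ hc)

end Translate

section Est

variable {N : ℕ}
local notation "EN" => EuclideanSpace ℝ (Fin N)

/-- the key single-bubble estimate: the magnetic quadratic form of a far translate is close
to the Dirichlet energy of `Φ`. -/
theorem translate_est
    (A : EuclideanSpace ℝ (Fin N) → EuclideanSpace ℝ (Fin N)) (hAmeas : Measurable A)
    {CA : ℝ} (hAbd : ∀ θ : EN, ‖A θ‖ ≤ CA)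
    (a : EuclideanSpace ℝ (Fin N) → ℝ) (hameas : Measurable a)
    {Ma : ℝ} (habd : ∀ θ : EN, |a θ| ≤ Ma)
    (Φ : EuclideanSpace ℝ (Fin N) → ℂ) (hΦ : ContDiff ℝ (⊤ : ℕ∞) Φ)
    (hΦsupp : HasCompactSupport Φ)
    {R : ℝ} (hsupp : tsupport Φ ⊆ closedBall 0 R)
    {KΦ : ℝ} (hKΦ : ∀ x, ‖Φ x‖ ≤ KΦ)
    {KD : ℝ} (hKD : ∀ x, ‖fderiv ℝ Φ x‖ ≤ KD)
    {c : EN} (hc : R + 1 ≤ ‖c‖) :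
    |Qf N A a (fun x => Φ (x + c)) - ∫ x, grad2 N Φ x|
      ≤ ((volume (closedBall (0 : EN) R)).toReal *
          ((N : ℝ) * (2 * KD * (CA * KΦ) + 3 * (CA * KΦ) ^ 2) + Ma * KΦ ^ 2)) *
        (1 / (‖c‖ - R)) := by
  have hCA : 0 ≤ CA := le_trans (norm_nonneg _) (hAbd 0)
  have hMa : 0 ≤ Ma := le_trans (abs_nonneg _) (habd 0)
  have hKΦ0 : 0 ≤ KΦ := le_trans (norm_nonneg _) (hKΦ 0)
  have hKD0 : 0 ≤ KD := le_trans (norm_nonneg _) (hKD 0)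
  have hδpos : (0:ℝ) < ‖c‖ - R := by linarith
  have hδnn : (0:ℝ) ≤ 1 / (‖c‖ - R) := by positivity
  have hδ1 : 1 / (‖c‖ - R) ≤ 1 := by rw [div_le_one hδpos]; linarith
  have hv : ContDiff ℝ (⊤ : ℕ∞) (fun y : EN => Φ (y + c)) := hΦ.comp (contDiff_id.add contDiff_const)
  have hg2 : grad2 N (fun y : EN => Φ (y + c)) = fun x => grad2 N Φ (x + c) :=
    funext fun x => by simp only [grad2, fderiv_translate' Φ hΦ c x]
  have hIgradΦ : Integrable (grad2 N Φ) := grad2_integrable Φ hΦ hΦsupp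
  have hIgradv : Integrable (grad2 N (fun y : EN => Φ (y + c))) := by
    rw [hg2]; exact hIgradΦ.comp_add_right c
  have hgeq : ∫ x, grad2 N (fun y : EN => Φ (y + c)) x = ∫ x, grad2 N Φ x := by
    rw [hg2]; exact integral_add_right_eq_self _ c
  have hImag : Integrable (magGrad2 N A (fun y : EN => Φ (y + c))) :=
    magGrad2_translate_integrable A Φ hAmeas hΦ hsupp hAbd hKΦ hKD hc
  have hIat : Integrable (fun x : EN => (a (‖x‖⁻¹ • x) / ‖x‖ ^ 2) * ‖Φ (x + c)‖ ^ 2) :=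
    aterm_translate_integrable a Φ hameas hΦ hsupp habd hKΦ hc
  -- pointwise bound on the difference of energy densities
  have hdiff : ∀ x, ‖magGrad2 N A (fun y : EN => Φ (y + c)) x
      - grad2 N (fun y : EN => Φ (y + c)) x‖ ≤
      (closedBall (-c) R).indicator
        (fun _ => ((N : ℝ) * (2 * KD * (CA * KΦ) + 3 * (CA * KΦ) ^ 2)) * (1 / (‖c‖ - R))) x := by
    intro x
    by_cases hx : x ∈ closedBall (-c) R
    · rw [Set.indicator_of_mem hx]
      obtain ⟨-, h3, h4⟩ := ball_norm_lb hc hx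
      have hxpos : (0:ℝ) < ‖x‖ := by linarith
      have hterm : ∀ j : Fin N,
          |‖Complex.I * fderiv ℝ (fun y : EN => Φ (y + c)) x (EuclideanSpace.single j 1)
              - ((A (‖x‖⁻¹ • x) j / ‖x‖ : ℝ) : ℂ) * Φ (x + c)‖ ^ 2
            - ‖fderiv ℝ (fun y : EN => Φ (y + c)) x (EuclideanSpace.single j 1)‖ ^ 2|
          ≤ (2 * KD * (CA * KΦ) + 3 * (CA * KΦ) ^ 2) * (1 / (‖c‖ - R)) := by
        intro j
        set D := fderiv ℝ (fun y : EN => Φ (y + c)) x (EuclideanSpace.single j 1) with hD_def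
        set z := ((A (‖x‖⁻¹ • x) j / ‖x‖ : ℝ) : ℂ) * Φ (x + c) with hz_def
        have hID : ‖Complex.I * D‖ = ‖D‖ := by rw [norm_mul, Complex.norm_I, one_mul]
        have hbd := sq_diff_bound (Complex.I * D) z
        rw [hID] at hbd
        have hDb : ‖D‖ ≤ KD := by
          rw [hD_def, fderiv_translate' Φ hΦ c x]
          exact fderiv_app_bound Φ hΦ hKD _ j
        have hzb : ‖z‖ ≤ (CA * KΦ) * (1 / (‖c‖ - R)) := by
          rw [hz_def, norm_mul, Complex.norm_real, Real.norm_eq_abs]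
          have h1 := (coeff_bound A hAbd hc hx j).1
          calc |A (‖x‖⁻¹ • x) j / ‖x‖| * ‖Φ (x + c)‖
              ≤ (CA / (‖c‖ - R)) * KΦ :=
                mul_le_mul h1 (hKΦ (x + c)) (norm_nonneg _) (by positivity)
          _ = (CA * KΦ) * (1 / (‖c‖ - R)) := by ring
        have hznn := norm_nonneg z
        have hDnn := norm_nonneg D
        have hzb2 : ‖z‖ ^ 2 ≤ (CA * KΦ) ^ 2 * (1 / (‖c‖ - R)) := by
          nlinarith [mul_self_le_mul_self hznn hzb, sq_nonneg (CA * KΦ), hδnn, hδ1,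
            mul_le_mul_of_nonneg_left hδ1 (mul_nonneg hδnn (sq_nonneg (CA * KΦ)))]
        nlinarith [hbd, mul_le_mul hDb hzb hznn hKD0, hzb2]
      simp only [magGrad2, grad2]
      rw [← Finset.sum_sub_distrib]
      calc |∑ j : Fin N, (‖Complex.I * fderiv ℝ (fun y : EN => Φ (y + c)) x
              (EuclideanSpace.single j 1)
              - ((A (‖x‖⁻¹ • x) j / ‖x‖ : ℝ) : ℂ) * Φ (x + c)‖ ^ 2
            - ‖fderiv ℝ (fun y : EN => Φ (y + c)) x (EuclideanSpace.single j 1)‖ ^ 2)|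
          ≤ ∑ j : Fin N, |‖Complex.I * fderiv ℝ (fun y : EN => Φ (y + c)) x
              (EuclideanSpace.single j 1)
              - ((A (‖x‖⁻¹ • x) j / ‖x‖ : ℝ) : ℂ) * Φ (x + c)‖ ^ 2
            - ‖fderiv ℝ (fun y : EN => Φ (y + c)) x (EuclideanSpace.single j 1)‖ ^ 2| :=
            Finset.abs_sum_le_sum_abs _ _
      _ ≤ ∑ _j : Fin N, (2 * KD * (CA * KΦ) + 3 * (CA * KΦ) ^ 2) * (1 / (‖c‖ - R)) :=
            Finset.sum_le_sum fun j _ => hterm j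
      _ = ((N : ℝ) * (2 * KD * (CA * KΦ) + 3 * (CA * KΦ) ^ 2)) * (1 / (‖c‖ - R)) := by
            rw [Finset.sum_const, Finset.card_univ, Fintype.card_fin, nsmul_eq_mul]; ring
    · rw [Set.indicator_of_notMem hx]
      obtain ⟨h0, hD0⟩ := translate_outside Φ hΦ hsupp c x hx
      simp [magGrad2, grad2, h0, hD0]
  have hsub : |(∫ x, magGrad2 N A (fun y : EN => Φ (y + c)) x)
      - ∫ x, grad2 N (fun y : EN => Φ (y + c)) x|
      ≤ (volume (closedBall (0 : EN) R)).toReal *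
        (((N : ℝ) * (2 * KD * (CA * KΦ) + 3 * (CA * KΦ) ^ 2)) * (1 / (‖c‖ - R))) := by
    rw [← integral_sub hImag hIgradv]
    exact integral_abs_le_ball (-c) hdiff
  have hat : |∫ x : EN, (a (‖x‖⁻¹ • x) / ‖x‖ ^ 2) * ‖Φ (x + c)‖ ^ 2|
      ≤ (volume (closedBall (0 : EN) R)).toReal * ((Ma * KΦ ^ 2) * (1 / (‖c‖ - R))) :=
    integral_abs_le_ball (-c) (aterm_translate_bound a Φ hΦ hsupp habd hKΦ hc)
  rw [Qf, ← hgeq]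
  calc |((∫ x, magGrad2 N A (fun y : EN => Φ (y + c)) x)
          - ∫ x : EN, (a (‖x‖⁻¹ • x) / ‖x‖ ^ 2) * ‖Φ (x + c)‖ ^ 2)
        - ∫ x, grad2 N (fun y : EN => Φ (y + c)) x|
      ≤ |(∫ x, magGrad2 N A (fun y : EN => Φ (y + c)) x)
          - ∫ x, grad2 N (fun y : EN => Φ (y + c)) x|
        + |∫ x : EN, (a (‖x‖⁻¹ • x) / ‖x‖ ^ 2) * ‖Φ (x + c)‖ ^ 2| := by
        rw [sub_right_comm]
        exact abs_sub _ _
  _ ≤ (volume (closedBall (0 : EN) R)).toReal *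
        (((N : ℝ) * (2 * KD * (CA * KΦ) + 3 * (CA * KΦ) ^ 2)) * (1 / (‖c‖ - R)))
      + (volume (closedBall (0 : EN) R)).toReal * ((Ma * KΦ ^ 2) * (1 / (‖c‖ - R))) :=
        add_le_add hsub hat
  _ = ((volume (closedBall (0 : EN) R)).toReal *
        ((N : ℝ) * (2 * KD * (CA * KΦ) + 3 * (CA * KΦ) ^ 2) + Ma * KΦ ^ 2)) *
        (1 / (‖c‖ - R)) := by ring

end Est

section Split

variable {N k : ℕ}
local notation "EN" => EuclideanSpace ℝ (Fin N)

theorem disjoint_case {R : ℝ} (hR : 0 ≤ R) (c : Fin k → EN)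
    (hc2 : ∀ i j, i ≠ j → 2 * R + 1 ≤ ‖c i - c j‖) (x : EN) :
    (∀ j, x ∉ closedBall (-c j) R) ∨
      ∃ j0, x ∈ closedBall (-c j0) R ∧ ∀ j, j ≠ j0 → x ∉ closedBall (-c j) R := by
  by_cases h : ∃ j0, x ∈ closedBall (-c j0) R
  · obtain ⟨j0, hj0⟩ := h
    refine Or.inr ⟨j0, hj0, fun j hj hmem => ?_⟩
    rw [mem_closedBall, dist_eq_norm, sub_neg_eq_add] at hj0 hmem
    have h2 := hc2 j0 j (fun hh => hj (hh.symm ▸ rfl))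
    have : ‖c j0 - c j‖ ≤ 2 * R := by
      calc ‖c j0 - c j‖ = ‖(x + c j0) - (x + c j)‖ := by rw [add_sub_add_left_eq_sub]
      _ ≤ ‖x + c j0‖ + ‖x + c j‖ := norm_sub_le _ _
      _ ≤ 2 * R := by linarith
    linarith
  · push_neg at h
    exact Or.inl h

theorem lp_split (Φ : EN → ℂ) (hΦ : ContDiff ℝ (⊤ : ℕ∞) Φ)
    {R : ℝ} (hR : 0 ≤ R) (hsupp : tsupport Φ ⊆ closedBall 0 R)
    {p : ℝ} (hp : 0 < p) (hint : Integrable (fun x : EN => ‖Φ x‖ ^ p))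
    (c : Fin k → EN) (hc2 : ∀ i j, i ≠ j → 2 * R + 1 ≤ ‖c i - c j‖) :
    ∫ x : EN, ‖∑ j, Φ (x + c j)‖ ^ p = (k : ℝ) * ∫ x : EN, ‖Φ x‖ ^ p := by
  have hpt : ∀ x : EN, ‖∑ j, Φ (x + c j)‖ ^ p = ∑ j, ‖Φ (x + c j)‖ ^ p := by
    intro x
    rcases disjoint_case hR c hc2 x with h | ⟨j0, hj0, hother⟩
    · have hz : ∀ j, Φ (x + c j) = 0 := fun j =>
        (translate_outside Φ hΦ hsupp (c j) x (h j)).1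
      simp [hz, Real.zero_rpow hp.ne']
    · have hz : ∀ j, j ≠ j0 → Φ (x + c j) = 0 := fun j hj =>
        (translate_outside Φ hΦ hsupp (c j) x (hother j hj)).1
      rw [Finset.sum_eq_single j0 (fun j _ hj => hz j hj) (fun h => absurd (Finset.mem_univ _) h),
        Finset.sum_eq_single j0 (fun j _ hj => by rw [hz j hj]; simp [Real.zero_rpow hp.ne'])
          (fun h => absurd (Finset.mem_univ _) h)]
  calc ∫ x : EN, ‖∑ j, Φ (x + c j)‖ ^ p = ∫ x : EN, ∑ j, ‖Φ (x + c j)‖ ^ p := by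
        congr 1; funext x; exact hpt x
  _ = ∑ j, ∫ x : EN, ‖Φ (x + c j)‖ ^ p :=
        integral_finset_sum _ (fun j _ => by exact hint.comp_add_right (c j))
  _ = ∑ _j : Fin k, ∫ x : EN, ‖Φ x‖ ^ p := by
        congr 1; funext j; exact integral_add_right_eq_self (fun x : EN => ‖Φ x‖ ^ p) (c j)
  _ = (k : ℝ) * ∫ x : EN, ‖Φ x‖ ^ p := by
        rw [Finset.sum_const, Finset.card_univ, Fintype.card_fin, nsmul_eq_mul]

theorem qf_split
    (A : EuclideanSpace ℝ (Fin N) → EuclideanSpace ℝ (Fin N)) (hAmeas : Measurable A)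
    {CA : ℝ} (hAbd : ∀ θ : EN, ‖A θ‖ ≤ CA)
    (a : EuclideanSpace ℝ (Fin N) → ℝ) (hameas : Measurable a)
    {Ma : ℝ} (habd : ∀ θ : EN, |a θ| ≤ Ma)
    (Φ : EN → ℂ) (hΦ : ContDiff ℝ (⊤ : ℕ∞) Φ)
    {R : ℝ} (hR : 0 ≤ R) (hsupp : tsupport Φ ⊆ closedBall 0 R)
    {KΦ : ℝ} (hKΦ : ∀ x, ‖Φ x‖ ≤ KΦ)
    {KD : ℝ} (hKD : ∀ x, ‖fderiv ℝ Φ x‖ ≤ KD)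
    (c : Fin k → EN) (hc1 : ∀ j, R + 1 ≤ ‖c j‖)
    (hc2 : ∀ i j, i ≠ j → 2 * R + 1 ≤ ‖c i - c j‖) :
    Qf N A a (fun x => ∑ j, Φ (x + c j)) = ∑ j, Qf N A a (fun x => Φ (x + c j)) := by
  have hdiffv : ∀ (j : Fin k) (x : EN), DifferentiableAt ℝ (fun y : EN => Φ (y + c j)) x :=
    fun j x => ((hΦ.comp (contDiff_id.add contDiff_const)).differentiable (by simp)) x
  have hDu : ∀ x : EN, fderiv ℝ (fun y : EN => ∑ j, Φ (y + c j)) x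
      = ∑ j, fderiv ℝ (fun y : EN => Φ (y + c j)) x := by
    intro x
    exact fderiv_fun_sum (fun j _ => hdiffv j x)
  -- pointwise splitting of the magnetic energy density
  have hmag : ∀ x : EN, magGrad2 N A (fun y : EN => ∑ j, Φ (y + c j)) x
      = ∑ j, magGrad2 N A (fun y : EN => Φ (y + c j)) x := by
    intro x
    rcases disjoint_case hR c hc2 x with h | ⟨j0, hj0, hother⟩
    · have hz : ∀ j : Fin k, Φ (x + c j) = 0 ∧ fderiv ℝ (fun y : EN => Φ (y + c j)) x = 0 :=
        fun j => translate_outside Φ hΦ hsupp (c j) x (h j)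
      have h1 : fderiv ℝ (fun y : EN => ∑ j, Φ (y + c j)) x = 0 := by
        rw [hDu x]
        exact Finset.sum_eq_zero fun j _ => (hz j).2
      have h2 : ∑ j, Φ (x + c j) = 0 := Finset.sum_eq_zero fun j _ => (hz j).1
      rw [Finset.sum_eq_zero fun j _ => ?_]
      · simp only [magGrad2, h1, h2]
        simp
      · simp only [magGrad2, (hz j).1, (hz j).2]
        simp
    · have hz : ∀ j, j ≠ j0 → Φ (x + c j) = 0 ∧ fderiv ℝ (fun y : EN => Φ (y + c j)) x = 0 :=
        fun j hj => translate_outside Φ hΦ hsupp (c j) x (hother j hj)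
      have h1 : fderiv ℝ (fun y : EN => ∑ j, Φ (y + c j)) x
          = fderiv ℝ (fun y : EN => Φ (y + c j0)) x := by
        rw [hDu x]
        exact Finset.sum_eq_single j0 (fun j _ hj => (hz j hj).2)
          (fun h => absurd (Finset.mem_univ _) h)
      have h2 : ∑ j, Φ (x + c j) = Φ (x + c j0) :=
        Finset.sum_eq_single j0 (fun j _ hj => (hz j hj).1)
          (fun h => absurd (Finset.mem_univ _) h)
      rw [Finset.sum_eq_single j0 (fun j _ hj => ?_) (fun h => absurd (Finset.mem_univ _) h)]
      · simp only [magGrad2, h1, h2]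
      · simp only [magGrad2, (hz j hj).1, (hz j hj).2]
        simp
  -- pointwise splitting of the potential density
  have hatp : ∀ x : EN, (a (‖x‖⁻¹ • x) / ‖x‖ ^ 2) * ‖∑ j, Φ (x + c j)‖ ^ 2
      = ∑ j, (a (‖x‖⁻¹ • x) / ‖x‖ ^ 2) * ‖Φ (x + c j)‖ ^ 2 := by
    intro x
    rcases disjoint_case hR c hc2 x with h | ⟨j0, hj0, hother⟩
    · have hz : ∀ j : Fin k, Φ (x + c j) = 0 := fun j =>
        (translate_outside Φ hΦ hsupp (c j) x (h j)).1
      simp [hz]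
    · have hz : ∀ j, j ≠ j0 → Φ (x + c j) = 0 := fun j hj =>
        (translate_outside Φ hΦ hsupp (c j) x (hother j hj)).1
      have h2 : ∑ j, Φ (x + c j) = Φ (x + c j0) :=
        Finset.sum_eq_single j0 (fun j _ hj => hz j hj)
          (fun h => absurd (Finset.mem_univ _) h)
      rw [h2, Finset.sum_eq_single j0 (fun j _ hj => by rw [hz j hj]; simp)
        (fun h => absurd (Finset.mem_univ _) h)]
  rw [Qf]
  have e1 : ∫ x, magGrad2 N A (fun y : EN => ∑ j, Φ (y + c j)) x
      = ∑ j, ∫ x, magGrad2 N A (fun y : EN => Φ (y + c j)) x := by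
    rw [show (fun x => magGrad2 N A (fun y : EN => ∑ j, Φ (y + c j)) x)
        = fun x => ∑ j, magGrad2 N A (fun y : EN => Φ (y + c j)) x from funext hmag]
    exact integral_finset_sum _ (fun j _ =>
      magGrad2_translate_integrable A Φ hAmeas hΦ hsupp hAbd hKΦ hKD (hc1 j))
  have e2 : ∫ x : EN, (a (‖x‖⁻¹ • x) / ‖x‖ ^ 2) * ‖∑ j, Φ (x + c j)‖ ^ 2
      = ∑ j, ∫ x : EN, (a (‖x‖⁻¹ • x) / ‖x‖ ^ 2) * ‖Φ (x + c j)‖ ^ 2 := by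
    rw [show (fun x : EN => (a (‖x‖⁻¹ • x) / ‖x‖ ^ 2) * ‖∑ j, Φ (x + c j)‖ ^ 2)
        = fun x : EN => ∑ j, (a (‖x‖⁻¹ • x) / ‖x‖ ^ 2) * ‖Φ (x + c j)‖ ^ 2 from funext hatp]
    exact integral_finset_sum _ (fun j _ =>
      aterm_translate_integrable a Φ hameas hΦ hsupp habd hKΦ (hc1 j))
  rw [e1, e2, ← Finset.sum_sub_distrib]
  rfl

end Split

/-- for `k` families of translations going to infinity and mutually
diverging, the Rayleigh quotient of `Σ_j Φ(·+x_n^j)` tends to `k^{2/N}` times the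
Dirichlet quotient of `Φ`; in particular the limit is `≥ k^{2/N} S`. -/
theorem stmt_15 (N : ℕ) (hN : 4 ≤ N)
    (A : EuclideanSpace ℝ (Fin N) → EuclideanSpace ℝ (Fin N))
    (hAmeas : Measurable A) (CA : ℝ) (hAbd : ∀ θ : EuclideanSpace ℝ (Fin N), ‖A θ‖ ≤ CA)
    (a : EuclideanSpace ℝ (Fin N) → ℝ) (hameas : Measurable a)
    (Ma : ℝ) (habd : ∀ θ : EuclideanSpace ℝ (Fin N), |a θ| ≤ Ma)
    (k : ℕ) (hk : 1 ≤ k)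
    (Φ : EuclideanSpace ℝ (Fin N) → ℂ) (hΦ : ContDiff ℝ (⊤ : ℕ∞) Φ)
    (hΦsupp : HasCompactSupport Φ) (hΦ0 : Φ ≠ 0)
    (xseq : Fin k → ℕ → EuclideanSpace ℝ (Fin N))
    (hdiv : ∀ j : Fin k, Tendsto (fun n => ‖xseq j n‖) atTop atTop)
    (hmut : ∀ i j : Fin k, i ≠ j →
      Tendsto (fun n => ‖xseq i n - xseq j n‖) atTop atTop) :
    Tendsto (fun n =>
        Qf N A a (fun x => ∑ j : Fin k, Φ (x + xseq j n)) /
          lpDen N (fun x => ∑ j : Fin k, Φ (x + xseq j n))) atTop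
      (nhds ((k : ℝ) ^ ((2 : ℝ) / (N : ℝ)) * ((∫ x, grad2 N Φ x) / lpDen N Φ))) ∧
    (k : ℝ) ^ ((2 : ℝ) / (N : ℝ)) * SobolevS N ≤
      (k : ℝ) ^ ((2 : ℝ) / (N : ℝ)) * ((∫ x, grad2 N Φ x) / lpDen N Φ) := by
  have hNR : (4:ℝ) ≤ (N:ℝ) := by exact_mod_cast hN
  have hN2 : (0:ℝ) < (N:ℝ) - 2 := by linarith
  have hNne : (N:ℝ) ≠ 0 := by linarith
  set p : ℝ := (2 * (N : ℝ)) / ((N : ℝ) - 2) with hp_def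
  set q : ℝ := ((N : ℝ) - 2) / (N : ℝ) with hq_def
  have hp : 0 < p := div_pos (by linarith) hN2
  -- support radius
  obtain ⟨R0, hR0ball⟩ := hΦsupp.isBounded.subset_closedBall 0
  set R : ℝ := max R0 1 with hR_def
  have hsupp : tsupport Φ ⊆ closedBall 0 R :=
    hR0ball.trans (closedBall_subset_closedBall (le_max_left _ _))
  have hR1 : 1 ≤ R := le_max_right _ _
  have hR0 : 0 ≤ R := by linarith
  -- bounds
  obtain ⟨KΦ, hKΦ⟩ := hΦsupp.exists_bound_of_continuous hΦ.continuous
  obtain ⟨KD, hKD⟩ := (hΦsupp.fderiv ℝ).exists_bound_of_continuous (hΦ.continuous_fderiv (by simp))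
  have hCA : 0 ≤ CA := le_trans (norm_nonneg _) (hAbd 0)
  have hMa : 0 ≤ Ma := le_trans (abs_nonneg _) (habd 0)
  have hKΦ0 : 0 ≤ KΦ := le_trans (norm_nonneg _) (hKΦ 0)
  have hKD0 : 0 ≤ KD := le_trans (norm_nonneg _) (hKD 0)
  -- the L^{2^*} mass of Φ
  have hcsp : HasCompactSupport (fun x : EuclideanSpace ℝ (Fin N) => ‖Φ x‖ ^ p) := by
    apply hΦsupp.mono
    intro x hx
    simp only [Function.mem_support] at hx ⊢
    intro h0
    apply hx
    rw [h0]
    simp [Real.zero_rpow hp.ne']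
  have hcontp : Continuous (fun x : EuclideanSpace ℝ (Fin N) => ‖Φ x‖ ^ p) :=
    (hΦ.continuous.norm).rpow_const (fun x => Or.inr hp.le)
  have hint_p : Integrable (fun x : EuclideanSpace ℝ (Fin N) => ‖Φ x‖ ^ p) :=
    hcontp.integrable_of_hasCompactSupport hcsp
  have hIΦ : 0 < ∫ x, ‖Φ x‖ ^ p := by
    apply (integral_pos_iff_support_of_nonneg
      (fun x => Real.rpow_nonneg (norm_nonneg _) p) hint_p).2
    have hss : Function.support Φ ⊆
        Function.support (fun x : EuclideanSpace ℝ (Fin N) => ‖Φ x‖ ^ p) := by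
      intro x hx
      simp only [Function.mem_support] at hx ⊢
      have : 0 < ‖Φ x‖ := norm_pos_iff.2 hx
      exact (Real.rpow_pos_of_pos this p).ne'
    obtain ⟨x0, hx0⟩ := Function.ne_iff.1 hΦ0
    apply lt_of_lt_of_le _ (measure_mono hss)
    exact (hΦ.continuous.isOpen_support).measure_pos volume ⟨x0, hx0⟩
  have hDΦval : lpDen N Φ = (∫ x, ‖Φ x‖ ^ p) ^ q := by
    simp only [lpDen]
    rfl
  have hDΦpos : 0 < lpDen N Φ := by
    rw [hDΦval]
    exact Real.rpow_pos_of_pos hIΦ q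
  constructor
  · -- the limit statement
    set C0 : ℝ := (volume (closedBall (0 : EuclideanSpace ℝ (Fin N)) R)).toReal *
      ((N : ℝ) * (2 * KD * (CA * KΦ) + 3 * (CA * KΦ) ^ 2) + Ma * KΦ ^ 2) with hC0_def
    have hC0 : 0 ≤ C0 := by
      apply mul_nonneg ENNReal.toReal_nonneg
      have h1 : 0 ≤ 2 * KD * (CA * KΦ) :=
        mul_nonneg (by linarith) (mul_nonneg hCA hKΦ0)
      have h2 : 0 ≤ 3 * (CA * KΦ) ^ 2 := by positivity
      have h3 : 0 ≤ Ma * KΦ ^ 2 := mul_nonneg hMa (sq_nonneg _)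
      have h4 : 0 ≤ (N : ℝ) := by linarith
      nlinarith
    have hEvent : ∀ M : ℝ, ∀ᶠ n in atTop,
        (∀ j, M ≤ ‖xseq j n‖) ∧ (∀ i j, i ≠ j → M ≤ ‖xseq i n - xseq j n‖) := by
      intro M
      have h1 : ∀ᶠ n in atTop, ∀ j, M ≤ ‖xseq j n‖ :=
        eventually_all.2 fun j => (hdiv j).eventually_ge_atTop M
      have h2 : ∀ᶠ n in atTop, ∀ i j, i ≠ j → M ≤ ‖xseq i n - xseq j n‖ := by
        apply eventually_all.2
        intro i
        apply eventually_all.2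
        intro j
        by_cases hij : i = j
        · exact Eventually.of_forall fun n h => absurd hij h
        · exact ((hmut i j hij).eventually_ge_atTop M).mono fun n hn _ => hn
      exact h1.and h2
    have hLp : ∀ᶠ n in atTop, lpDen N (fun x => ∑ j : Fin k, Φ (x + xseq j n))
        = (k : ℝ) ^ q * lpDen N Φ := by
      filter_upwards [hEvent (2 * R + 1)] with n hn
      have hc2 : ∀ i j : Fin k, i ≠ j → 2 * R + 1 ≤ ‖xseq i n - xseq j n‖ :=
        fun i j hij => hn.2 i j hij
      have hls := lp_split Φ hΦ hR0 hsupp hp hint_p (fun j => xseq j n) hc2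
      simp only [lpDen]
      rw [← hp_def, ← hq_def, hls, Real.mul_rpow (Nat.cast_nonneg k) hIΦ.le]
    have hQf : Tendsto (fun n => Qf N A a (fun x => ∑ j : Fin k, Φ (x + xseq j n))) atTop
        (nhds ((k : ℝ) * ∫ x, grad2 N Φ x)) := by
      rw [Metric.tendsto_nhds]
      intro ε hε
      set M : ℝ := max (2 * R + 1) (R + 1 + (k : ℝ) * C0 / ε) with hM_def
      filter_upwards [hEvent M] with n hn
      obtain ⟨h1, h2⟩ := hn
      have hM1 : 2 * R + 1 ≤ M := le_max_left _ _
      have hM2 : R + 1 + (k : ℝ) * C0 / ε ≤ M := le_max_right _ _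
      have hkC0 : 0 ≤ (k : ℝ) * C0 / ε := div_nonneg (mul_nonneg (Nat.cast_nonneg k) hC0) hε.le
      have hc1 : ∀ j, R + 1 ≤ ‖xseq j n‖ := fun j => le_trans (by linarith) (h1 j)
      have hc2 : ∀ i j : Fin k, i ≠ j → 2 * R + 1 ≤ ‖xseq i n - xseq j n‖ :=
        fun i j hij => le_trans hM1 (h2 i j hij)
      have hMR : (0:ℝ) < M - R := by linarith
      rw [Real.dist_eq]
      rw [qf_split A hAmeas hAbd a hameas habd Φ hΦ hR0 hsupp hKΦ hKD
        (fun j => xseq j n) hc1 hc2]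
      have hkG : (k : ℝ) * ∫ x, grad2 N Φ x = ∑ _j : Fin k, ∫ x, grad2 N Φ x := by
        rw [Finset.sum_const, Finset.card_univ, Fintype.card_fin, nsmul_eq_mul]
      rw [hkG, ← Finset.sum_sub_distrib]
      have hstep : ∀ j : Fin k,
          |Qf N A a (fun x => Φ (x + xseq j n)) - ∫ x, grad2 N Φ x| ≤ C0 * (1 / (M - R)) := by
        intro j
        have hest := translate_est A hAmeas hAbd a hameas habd Φ hΦ hΦsupp hsupp hKΦ hKD (hc1 j)
        apply hest.trans
        rw [← hC0_def]
        apply mul_le_mul_of_nonneg_left _ hC0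
        apply one_div_le_one_div_of_le hMR
        have := h1 j
        linarith
      calc |∑ j : Fin k, (Qf N A a (fun x => Φ (x + xseq j n)) - ∫ x, grad2 N Φ x)|
          ≤ ∑ j : Fin k, |Qf N A a (fun x => Φ (x + xseq j n)) - ∫ x, grad2 N Φ x| :=
            Finset.abs_sum_le_sum_abs _ _
      _ ≤ ∑ _j : Fin k, C0 * (1 / (M - R)) := Finset.sum_le_sum fun j _ => hstep j
      _ = (k : ℝ) * C0 * (1 / (M - R)) := by
            rw [Finset.sum_const, Finset.card_univ, Fintype.card_fin, nsmul_eq_mul]; ring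
      _ < ε := by
            rw [mul_one_div, div_lt_iff₀ hMR]
            have hfs : ε * ((k : ℝ) * C0 / ε) = (k : ℝ) * C0 := by
              field_simp
            nlinarith [mul_le_mul_of_nonneg_left (by linarith : 1 + (k : ℝ) * C0 / ε ≤ M - R) hε.le]
    -- assemble the limit
    have hkpos : (0:ℝ) < (k : ℝ) := by exact_mod_cast hk
    have hkqpos : (0:ℝ) < (k : ℝ) ^ q := Real.rpow_pos_of_pos hkpos q
    have hqexp : (2:ℝ) / (N:ℝ) + q = 1 := by
      rw [hq_def]
      field_simp
      ring
    have hkq : (k : ℝ) ^ ((2:ℝ) / (N:ℝ)) * (k : ℝ) ^ q = (k : ℝ) := by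
      rw [← Real.rpow_add hkpos, hqexp, Real.rpow_one]
    have hval : (k : ℝ) * (∫ x, grad2 N Φ x) / ((k : ℝ) ^ q * lpDen N Φ)
        = (k : ℝ) ^ ((2:ℝ) / (N:ℝ)) * ((∫ x, grad2 N Φ x) / lpDen N Φ) := by
      calc (k : ℝ) * (∫ x, grad2 N Φ x) / ((k : ℝ) ^ q * lpDen N Φ)
          = ((k : ℝ) ^ ((2:ℝ) / (N:ℝ)) * (k : ℝ) ^ q) * (∫ x, grad2 N Φ x) /
            ((k : ℝ) ^ q * lpDen N Φ) := by rw [hkq]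
      _ = (k : ℝ) ^ ((2:ℝ) / (N:ℝ)) * ((∫ x, grad2 N Φ x) / lpDen N Φ) := by
            rw [mul_assoc, mul_div_assoc, mul_div_mul_left _ _ hkqpos.ne']
    have hTend := hQf.div_const ((k : ℝ) ^ q * lpDen N Φ)
    rw [← hval]
    apply hTend.congr'
    filter_upwards [hLp] with n hn
    rw [hn]
  · -- the Sobolev bound
    apply mul_le_mul_of_nonneg_left _ (Real.rpow_nonneg (Nat.cast_nonneg k) _)
    apply csInf_le
    · refine ⟨0, ?_⟩
      rintro r ⟨u, hu1, hu2, hu3, rfl⟩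
      apply div_nonneg
      · exact integral_nonneg fun x => Finset.sum_nonneg fun j _ => sq_nonneg _
      · exact Real.rpow_nonneg (integral_nonneg fun x =>
          Real.rpow_nonneg (norm_nonneg _) _) _
    · exact ⟨Φ, hΦ, hΦsupp, hΦ0, rfl⟩
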